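/- arXiv:1605.01309 — 2 statements merged into one kernel-verified Lean document; each statement's English description precedes it below -/
import Mathlib

section
/- Let ψ_n := (P_Γ^c − 1)φ_n = −C_Γ χ_Γ − χ_{Γ^c} φ_n, where C_Γ is the mean of φ_n over Γ. Then for every integer k and 0 < h ≤ π, the Fourier coefficient |ψ̂_n(k)| = |(1/(2π))∫_0^{2π} ψ_n(θ) e^{−ikθ} dθ| ≤ C h, with C independent of n, k and h. -/
/-!
Write `a = h/2`, `b = 2π - h/2`, so that `Γ ≅ [a, b]` and `Γ^c ≅ [0, a] ∪ [b, 2π]`.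
Since `∫₀^{2π} e^{inθ} dθ = 0` for `n ≠ 0`, the integral of `φ_n` over `Γ` equals minus its
integral over `Γ^c`, an arc of length `h`; hence `|C_Γ| ≤ h / (2π - h)`. The integrand of
`ψ̂_n(k)` is therefore bounded by `1` on `Γ^c` and by `h / (2π - h)` on `Γ`, and integrating gives
`|ψ̂_n(k)| ≤ (h + h) / (2π) ≤ h`.
-/

open Real Complex intervalIntegral Set MeasureTheory

section BoundedIntegrals

variable {E : Type*} [NormedAddCommGroup E] {f : ℝ → E} {M : ℝ}

theorem intervalIntegrable_of_norm_le (hf : AEStronglyMeasurable f) (hM : ∀ x, ‖f x‖ ≤ M)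
    (a b : ℝ) : IntervalIntegrable f volume a b :=
  (intervalIntegrable_const (c := M)).mono_fun' hf.restrict (ae_of_all _ hM)

variable [NormedSpace ℝ E]

theorem norm_integral_le_of_integral_eq_zero (hf : AEStronglyMeasurable f)
    (hM : ∀ x, ‖f x‖ ≤ M) {p q a b : ℝ} (hpq : ∫ x in p..q, f x = 0) (hpa : p ≤ a)
    (hbq : b ≤ q) : ‖∫ x in a..b, f x‖ ≤ M * ((a - p) + (q - b)) := by
  have hint := intervalIntegrable_of_norm_le hf hM
  have hsplit : ∫ x in a..b, f x = (∫ x in a..p, f x) + ∫ x in q..b, f x := by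
    rw [← integral_add_adjacent_intervals (hint a q) (hint q b),
      ← integral_add_adjacent_intervals (hint a p) (hint p q), hpq, add_zero]
  calc ‖∫ x in a..b, f x‖ ≤ ‖∫ x in a..p, f x‖ + ‖∫ x in q..b, f x‖ := by
        rw [hsplit]; exact norm_add_le _ _
    _ ≤ M * |p - a| + M * |b - q| :=
        add_le_add (norm_integral_le_of_norm_le_const fun x _ => hM x)
          (norm_integral_le_of_norm_le_const fun x _ => hM x)
    _ = M * ((a - p) + (q - b)) := by
        rw [abs_of_nonpos (by linarith), abs_of_nonpos (by linarith)]; ring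

theorem norm_integral_le_of_norm_le_on_Icc (hf : AEStronglyMeasurable f)
    (hM : ∀ x, ‖f x‖ ≤ M) {m p q a b : ℝ} (hm : ∀ x ∈ Icc a b, ‖f x‖ ≤ m) (hpa : p ≤ a)
    (hab : a ≤ b) (hbq : b ≤ q) :
    ‖∫ x in p..q, f x‖ ≤ M * ((a - p) + (q - b)) + m * (b - a) := by
  have hint := intervalIntegrable_of_norm_le hf hM
  have hmid : ‖∫ x in a..b, f x‖ ≤ m * (b - a) := by
    refine (norm_integral_le_of_norm_le_const fun x hx => hm x ?_).trans_eq
      (by rw [abs_of_nonneg (sub_nonneg.2 hab)])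
    rw [uIoc_of_le hab] at hx
    exact Ioc_subset_Icc_self hx
  rw [← integral_add_adjacent_intervals (hint p a) (hint a q),
    ← integral_add_adjacent_intervals (hint a b) (hint b q)]
  calc ‖(∫ x in p..a, f x) + ((∫ x in a..b, f x) + ∫ x in b..q, f x)‖
      ≤ ‖∫ x in p..a, f x‖ + (‖∫ x in a..b, f x‖ + ‖∫ x in b..q, f x‖) :=
        (norm_add_le _ _).trans (add_le_add_right (norm_add_le _ _) _)
    _ ≤ M * |a - p| + (m * (b - a) + M * |q - b|) :=
        add_le_add (norm_integral_le_of_norm_le_const fun x _ => hM x)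
          (add_le_add hmid (norm_integral_le_of_norm_le_const fun x _ => hM x))
    _ = M * ((a - p) + (q - b)) + m * (b - a) := by
        rw [abs_of_nonneg (by linarith), abs_of_nonneg (by linarith)]; ring

end BoundedIntegrals

theorem norm_cexp_int_mul_ofReal_mul_I (n : ℤ) (θ : ℝ) : ‖cexp (n * θ * I)‖ = 1 := by
  rw [← ofReal_intCast, ← ofReal_mul]
  exact norm_exp_ofReal_mul_I _

theorem integral_cexp_int_mul_ofReal_mul_I {n : ℤ} (hn : n ≠ 0) :
    ∫ θ in (0 : ℝ)..(2 * π), cexp (n * θ * I) = 0 := by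
  have hnI : (n : ℂ) * I ≠ 0 := mul_ne_zero (Int.cast_ne_zero.2 hn) I_ne_zero
  simp_rw [mul_right_comm _ _ I]
  rw [integral_exp_mul_complex hnI, ofReal_zero, mul_zero, Complex.exp_zero,
    show (n : ℂ) * I * ((2 * π : ℝ) : ℂ) = n * (2 * π * I) by push_cast; ring,
    exp_int_mul_two_pi_mul_I, sub_self, zero_div]

theorem norm_integral_cexp_int_mul_ofReal_mul_I_le {n : ℤ} (hn : n ≠ 0) {h : ℝ} (hh : 0 ≤ h) :
    ‖∫ τ in (h / 2)..(2 * π - h / 2), cexp (n * τ * I)‖ ≤ h := by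
  have hbound := norm_integral_le_of_integral_eq_zero
    (by fun_prop : Continuous fun τ : ℝ => cexp (n * τ * I)).aestronglyMeasurable
    (fun τ => (norm_cexp_int_mul_ofReal_mul_I n τ).le) (integral_cexp_int_mul_ofReal_mul_I hn)
    (by linarith : 0 ≤ h / 2) (by linarith : 2 * π - h / 2 ≤ 2 * π)
  linarith

noncomputable def fourierMode (n : ℤ) (θ : ℝ) : ℂ := (1 / Real.sqrt (2 * π) : ℂ) * cexp (n * θ * I)

/-- `ψ_n = (P_Γ^c − 1)φ_n`, with `Γ` parametrized by `[h/2, 2π − h/2]`. -/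
noncomputable def cutoffResidual (n : ℤ) (h θ : ℝ) : ℂ :=
  if θ ∈ Icc (h / 2) (2 * π - h / 2) then
    -((1 / (2 * π - h) : ℂ) * ∫ τ in (h / 2)..(2 * π - h / 2), fourierMode n τ)
  else -fourierMode n θ

theorem norm_one_div_sqrt_two_pi_le_one : ‖(1 / Real.sqrt (2 * π) : ℂ)‖ ≤ 1 := by
  rw [norm_div, norm_one, Complex.norm_of_nonneg (sqrt_nonneg _)]
  exact div_le_one_of_le₀ (one_le_sqrt.2 (by linarith [pi_gt_three])) (sqrt_nonneg _)

theorem norm_fourierMode_le_one (n : ℤ) (θ : ℝ) : ‖fourierMode n θ‖ ≤ 1 := by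
  rw [fourierMode, norm_mul, norm_cexp_int_mul_ofReal_mul_I, mul_one]
  exact norm_one_div_sqrt_two_pi_le_one

theorem norm_integral_fourierMode_le {n : ℤ} (hn : n ≠ 0) {h : ℝ} (hh : 0 ≤ h) :
    ‖∫ τ in (h / 2)..(2 * π - h / 2), fourierMode n τ‖ ≤ h := by
  simp only [fourierMode]
  rw [intervalIntegral.integral_const_mul, norm_mul]
  exact (mul_le_mul norm_one_div_sqrt_two_pi_le_one
    (norm_integral_cexp_int_mul_ofReal_mul_I_le hn hh) (norm_nonneg _) zero_le_one).trans_eq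
    (one_mul h)

theorem norm_cutoffResidual_le_of_mem {n : ℤ} (hn : n ≠ 0) {h θ : ℝ} (hh0 : 0 ≤ h)
    (hh : h < 2 * π) (hθ : θ ∈ Icc (h / 2) (2 * π - h / 2)) :
    ‖cutoffResidual n h θ‖ ≤ h / (2 * π - h) := by
  have hgap : 0 < 2 * π - h := sub_pos.2 hh
  have hinv : ‖(1 / (2 * π - h) : ℂ)‖ = 1 / (2 * π - h) := by
    rw [show (1 / (2 * π - h) : ℂ) = ((1 / (2 * π - h) : ℝ) : ℂ) by push_cast; ring,
      Complex.norm_of_nonneg (one_div_pos.2 hgap).le]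
  rw [cutoffResidual, if_pos hθ, norm_neg, norm_mul, hinv, one_div_mul_eq_div]
  gcongr
  exact norm_integral_fourierMode_le hn hh0

theorem norm_cutoffResidual_le_one {n : ℤ} (hn : n ≠ 0) {h : ℝ} (hh0 : 0 ≤ h) (hhπ : h ≤ π)
    (θ : ℝ) : ‖cutoffResidual n h θ‖ ≤ 1 := by
  by_cases hθ : θ ∈ Icc (h / 2) (2 * π - h / 2)
  · have hgap : 0 < 2 * π - h := by linarith [pi_pos]
    exact (norm_cutoffResidual_le_of_mem hn hh0 (by linarith) hθ).trans
      ((div_le_one hgap).2 (by linarith))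
  · rw [cutoffResidual, if_neg hθ, norm_neg]
    exact norm_fourierMode_le_one n θ

theorem measurable_cutoffResidual (n : ℤ) (h : ℝ) : Measurable (cutoffResidual n h) :=
  Measurable.ite measurableSet_Icc measurable_const
    (by unfold fourierMode; fun_prop : Continuous (fourierMode n)).measurable.neg

/-- Fourier coefficients of `(P_Γ^c − 1)φ_n = −C_Γ χ_Γ − χ_{Γ^c} φ_n` are
uniformly `O(h)`: there is `C > 0`, independent of `n`, `k` and `h`, such that
`|ψ̂_n(k)| ≤ C h` for all `n ≠ 0`, all `k ∈ ℤ` and `0 < h ≤ π`. Here the circle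
is parametrized by `θ ∈ [0, 2π]`, `Γ` corresponds to `[h/2, 2π − h/2]` and
`Γ^c` to the complementary arc of length `h`. -/
theorem stmt_2 :
    ∃ C : ℝ, 0 < C ∧ ∀ (n : ℤ), n ≠ 0 → ∀ (k : ℤ) (h : ℝ), 0 < h → h ≤ π →
      ‖((1 / (2 * π) : ℂ) *
        ∫ θ in (0:ℝ)..(2 * π),
          (if θ ∈ Icc (h / 2) (2 * π - h / 2) then
              -(((1 / (2 * π - h) : ℂ)) *
                ∫ τ in (h / 2)..(2 * π - h / 2),
                  (1 / Real.sqrt (2 * π) : ℂ) * Complex.exp ((n : ℂ) * (τ : ℂ) * Complex.I))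
            else
              -((1 / Real.sqrt (2 * π) : ℂ) * Complex.exp ((n : ℂ) * (θ : ℂ) * Complex.I)))
          * Complex.exp (-(k : ℂ) * (θ : ℂ) * Complex.I))‖
      ≤ C * h := by
  refine ⟨1, one_pos, fun n hn k h hh0 hhπ => ?_⟩
  change ‖(1 / (2 * π) : ℂ) * ∫ θ in (0 : ℝ)..(2 * π),
    cutoffResidual n h θ * cexp (-k * θ * I)‖ ≤ 1 * h
  have hnorm (θ : ℝ) : ‖cutoffResidual n h θ * cexp (-k * θ * I)‖ = ‖cutoffResidual n h θ‖ := by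
    rw [norm_mul, ← Int.cast_neg, norm_cexp_int_mul_ofReal_mul_I, mul_one]
  have hint : ‖∫ θ in (0 : ℝ)..(2 * π), cutoffResidual n h θ * cexp (-k * θ * I)‖ ≤ 2 * h := by
    refine (norm_integral_le_of_norm_le_on_Icc
      ((measurable_cutoffResidual n h).mul (by fun_prop)).aestronglyMeasurable
      (fun θ => (hnorm θ).trans_le (norm_cutoffResidual_le_one hn hh0.le hhπ θ))
      (fun θ hθ => (hnorm θ).trans_le
        (norm_cutoffResidual_le_of_mem hn hh0.le (by linarith [pi_pos]) hθ))
      (by linarith : 0 ≤ h / 2) (by linarith [pi_pos])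
      (by linarith : 2 * π - h / 2 ≤ 2 * π)).trans_eq ?_
    have hgap : 2 * π - h ≠ 0 := by linarith [pi_pos]
    field_simp
    ring
  rw [norm_mul, show (1 / (2 * π) : ℂ) = ((1 / (2 * π) : ℝ) : ℂ) by push_cast; ring,
    Complex.norm_of_nonneg (by positivity : (0 : ℝ) ≤ 1 / (2 * π))]
  calc 1 / (2 * π) * ‖_‖ ≤ 1 / (2 * π) * (2 * h) := by gcongr
    _ ≤ 1 * h := by
        rw [one_div_mul_eq_div, div_le_iff₀ (by positivity)]
        nlinarith [pi_gt_three]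
end

section
/- Combining uniform boundedness of Fourier coefficients of (P_Γ^c − 1)φ_n with the H^{−1} summation bound: for all n ≠ 0 and 0 < h ≤ π, ‖(P_Γ^c − 1)φ_n‖_{H^{−1}(∂Ω)} ≤ C h, with C independent of n. -/
/-!
On `Γ` the function `(P_Γ^c − 1)φ_n` is the constant `−c`, where `c` is the mean of `φ_n` over `Γ`,
and off `Γ` it is `−φ_n`. Since `φ_n` has mean zero over a full period (`n ≠ 0`), its integral
over `Γ` is at most the length `h` of the missing arc, so `|c| ≤ h / ((2π − h)√(2π))`. Splitting
the Fourier integral at the ends of `Γ` then bounds every Fourier coefficient by `h / (π√(2π))`,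
uniformly in `n` and `k`, and the weights `(1 + k²)⁻¹` are summable.
-/

open Real Complex intervalIntegral Set

lemma summable_inv_one_add_sq : Summable fun k : ℤ ↦ (1 + (k : ℝ) ^ 2)⁻¹ := by
  refine Summable.of_norm_bounded_eventually (summable_one_div_int_pow.mpr one_lt_two) ?_
  filter_upwards [Filter.eventually_cofinite_ne 0] with k hk
  have hk2 : (0 : ℝ) < (k : ℝ) ^ 2 := by positivity
  rw [norm_inv, Real.norm_of_nonneg (by positivity), one_div]
  exact inv_anti₀ hk2 (by linarith)

lemma sqrt_tsum_inv_one_add_sq_mul_sq_le {E : Type*} [SeminormedAddCommGroup E] (a : ℤ → E)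
    {B : ℝ} (ha : ∀ k, ‖a k‖ ≤ B) :
    √(∑' k : ℤ, (1 + (k : ℝ) ^ 2)⁻¹ * ‖a k‖ ^ 2) ≤ √(∑' k : ℤ, (1 + (k : ℝ) ^ 2)⁻¹) * B := by
  have hB : 0 ≤ B := (norm_nonneg _).trans (ha 0)
  have hterm : ∀ k : ℤ, (1 + (k : ℝ) ^ 2)⁻¹ * ‖a k‖ ^ 2 ≤ (1 + (k : ℝ) ^ 2)⁻¹ * B ^ 2 :=
    fun k ↦ by gcongr; exact ha k
  have hsum : Summable fun k : ℤ ↦ (1 + (k : ℝ) ^ 2)⁻¹ * B ^ 2 :=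
    summable_inv_one_add_sq.mul_right _
  calc √(∑' k : ℤ, (1 + (k : ℝ) ^ 2)⁻¹ * ‖a k‖ ^ 2)
      ≤ √(∑' k : ℤ, (1 + (k : ℝ) ^ 2)⁻¹ * B ^ 2) :=
        Real.sqrt_le_sqrt <| (hsum.of_nonneg_of_le (fun k ↦ by positivity) hterm).tsum_le_tsum
          hterm hsum
    _ = √(∑' k : ℤ, (1 + (k : ℝ) ^ 2)⁻¹) * B := by
        rw [tsum_mul_right, Real.sqrt_mul (tsum_nonneg fun k ↦ by positivity), Real.sqrt_sq hB]

lemma norm_exp_int_mul_ofReal_mul_I (m : ℤ) (θ : ℝ) : ‖cexp (m * θ * I)‖ = 1 := by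
  simp [Complex.norm_exp]

lemma norm_integral_exp_int_mul_I_le {n : ℤ} (hn : n ≠ 0) (a b : ℝ) :
    ‖∫ τ in a..b, cexp (n * τ * I)‖ ≤ |b - a - 2 * π| := by
  have hnI : (n : ℂ) * I ≠ 0 := by simp [hn]
  have hshift : cexp (n * I * a) = cexp (n * I * (a + 2 * π : ℝ)) := by
    rw [show (n : ℂ) * I * (a + 2 * π : ℝ) = n * I * a + n * (2 * π * I) by push_cast; ring,
      Complex.exp_add, exp_int_mul_two_pi_mul_I, mul_one]
  simp_rw [show ∀ τ : ℝ, (n : ℂ) * τ * I = n * I * τ from fun τ ↦ by ring]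
  rw [integral_exp_mul_complex hnI, hshift, norm_div,
    show cexp (n * I * b) - cexp (n * I * (a + 2 * π : ℝ))
      = cexp (n * I * (a + 2 * π : ℝ)) * (cexp (I * (n * (b - a - 2 * π) : ℝ)) - 1) by
        rw [mul_sub, ← Complex.exp_add, mul_one]; push_cast; ring_nf,
    norm_mul, norm_mul, norm_I, mul_one, div_le_iff₀ (by simpa using hn)]
  rw [show ‖cexp (n * I * (a + 2 * π : ℝ))‖ = 1 by simp [Complex.norm_exp], one_mul]
  calc ‖cexp (I * (n * (b - a - 2 * π) : ℝ)) - 1‖ ≤ ‖(n * (b - a - 2 * π) : ℝ)‖ :=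
        Real.norm_exp_I_mul_ofReal_sub_one_le
    _ = |b - a - 2 * π| * ‖(n : ℂ)‖ := by
        rw [Real.norm_eq_abs, abs_mul, Complex.norm_intCast, mul_comm]

lemma norm_integral_le_of_norm_le_of_norm_le_on {E : Type*} [NormedAddCommGroup E]
    [NormedSpace ℝ E] {F : ℝ → E} {a s t b M m : ℝ} (has : a ≤ s) (hst : s ≤ t) (htb : t ≤ b)
    (hF : IntervalIntegrable F MeasureTheory.volume a b) (hM : ∀ x ∈ Icc a b, ‖F x‖ ≤ M)
    (hm : ∀ x ∈ Icc s t, ‖F x‖ ≤ m) :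
    ‖∫ x in a..b, F x‖ ≤ M * (s - a) + m * (t - s) + M * (b - t) := by
  have hsub : ∀ {u v : ℝ}, a ≤ u → u ≤ v → v ≤ b → IntervalIntegrable F MeasureTheory.volume u v :=
    fun hu huv hv ↦ hF.mono_set <| by
      rw [uIcc_of_le huv, uIcc_of_le (hu.trans (huv.trans hv))]; exact Icc_subset_Icc hu hv
  have piece : ∀ {u v C : ℝ}, u ≤ v → (∀ x ∈ Icc u v, ‖F x‖ ≤ C) →
      ‖∫ x in u..v, F x‖ ≤ C * (v - u) := fun huv hC ↦ by
    simpa [abs_of_nonneg (sub_nonneg.2 huv)] using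
      norm_integral_le_of_norm_le_const fun x hx ↦
        hC x (Ioc_subset_Icc_self (uIoc_of_le huv ▸ hx))
  rw [← integral_add_adjacent_intervals (hsub le_rfl has (hst.trans htb))
      (hsub has (hst.trans htb) le_rfl),
    ← integral_add_adjacent_intervals (hsub has hst htb) (hsub (has.trans hst) htb le_rfl),
    ← add_assoc]
  have h₁ := piece has fun x hx ↦ hM x ⟨hx.1, hx.2.trans (hst.trans htb)⟩
  have h₃ := piece htb fun x hx ↦ hM x ⟨has.trans (hst.trans hx.1), hx.2⟩
  linarith [piece hst hm,
    norm_add₃_le (a := ∫ x in a..s, F x) (b := ∫ x in s..t, F x) (c := ∫ x in t..b, F x)]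

lemma norm_mean_exp_int_mul_I_le {n : ℤ} (hn : n ≠ 0) {h : ℝ} (h0 : 0 < h) (hγ : 0 < 2 * π - h) :
    ‖(1 / (2 * π - h) : ℂ) * ∫ τ in (h / 2)..(2 * π - h / 2), (1 / √(2 * π) : ℂ) * cexp (n * τ * I)‖
      ≤ h / ((2 * π - h) * √(2 * π)) := by
  have hint := norm_integral_exp_int_mul_I_le hn (h / 2) (2 * π - h / 2)
  rw [show 2 * π - h / 2 - h / 2 - 2 * π = -h by ring, abs_neg, abs_of_pos h0] at hint
  rw [integral_const_mul, norm_mul, norm_mul,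
    show (1 / (2 * π - h) : ℂ) = ((1 / (2 * π - h) : ℝ) : ℂ) by push_cast; rfl,
    show (1 / √(2 * π) : ℂ) = ((1 / √(2 * π) : ℝ) : ℂ) by push_cast; rfl,
    norm_real, norm_real, Real.norm_of_nonneg (one_div_pos.2 hγ).le,
    Real.norm_of_nonneg (by positivity)]
  calc 1 / (2 * π - h) * (1 / √(2 * π) * ‖∫ τ in (h / 2)..(2 * π - h / 2), cexp (n * τ * I)‖)
      ≤ 1 / (2 * π - h) * (1 / √(2 * π) * h) := by gcongr
    _ = h / ((2 * π - h) * √(2 * π)) := by field_simp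

lemma norm_fourierCoeff_cutoff_sub_le {n : ℤ} (hn : n ≠ 0) {h : ℝ} (h0 : 0 < h) (hπ : h ≤ π)
    (k : ℤ) :
    ‖(1 / (2 * π) : ℂ) * ∫ θ in (0 : ℝ)..(2 * π),
        (if θ ∈ Icc (h / 2) (2 * π - h / 2) then
            -((1 / (2 * π - h) : ℂ) *
              ∫ τ in (h / 2)..(2 * π - h / 2), (1 / √(2 * π) : ℂ) * cexp (n * τ * I))
          else -((1 / √(2 * π) : ℂ) * cexp (n * θ * I)))
        * cexp (-k * θ * I)‖
    ≤ h / (π * √(2 * π)) := by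
  have hs : 0 < √(2 * π) := by positivity
  have hγ : 0 < 2 * π - h := by linarith [pi_pos]
  have hφ : ∀ θ : ℝ, ‖(1 / √(2 * π) : ℂ) * cexp (n * θ * I)‖ = 1 / √(2 * π) := fun θ ↦ by
    rw [norm_mul, norm_exp_int_mul_ofReal_mul_I, mul_one, ← ofReal_one, ← ofReal_div, norm_real,
      Real.norm_of_nonneg (by positivity)]
  set c : ℂ := (1 / (2 * π - h) : ℂ) * ∫ τ in (h / 2)..(2 * π - h / 2),
    (1 / √(2 * π) : ℂ) * cexp (n * τ * I)
  have hc : ‖c‖ ≤ h / ((2 * π - h) * √(2 * π)) := norm_mean_exp_int_mul_I_le hn h0 hγ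
  have hcM : h / ((2 * π - h) * √(2 * π)) ≤ 1 / √(2 * π) := by
    rw [div_le_div_iff₀ (by positivity) hs]; nlinarith
  set F : ℝ → ℂ := fun θ ↦
    (if θ ∈ Icc (h / 2) (2 * π - h / 2) then -c else -((1 / √(2 * π) : ℂ) * cexp (n * θ * I)))
      * cexp (-k * θ * I) with hF_def
  have hF_norm : ∀ θ, ‖F θ‖ = ‖if θ ∈ Icc (h / 2) (2 * π - h / 2) then -c
      else -((1 / √(2 * π) : ℂ) * cexp (n * θ * I))‖ := fun θ ↦ by
    rw [hF_def, norm_mul, ← Int.cast_neg, norm_exp_int_mul_ofReal_mul_I, mul_one]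
  have hF : ∀ θ, ‖F θ‖ ≤ 1 / √(2 * π) := fun θ ↦ by
    rw [hF_norm]
    split_ifs
    · rw [norm_neg]; exact hc.trans hcM
    · rw [norm_neg, hφ]
  have hFΓ : ∀ θ ∈ Icc (h / 2) (2 * π - h / 2), ‖F θ‖ ≤ h / ((2 * π - h) * √(2 * π)) :=
    fun θ hθ ↦ by rw [hF_norm, if_pos hθ, norm_neg]; exact hc
  have hF_meas : Measurable F :=
    (measurable_const.ite measurableSet_Icc (by fun_prop)).mul (by fun_prop)
  have hF_int : IntervalIntegrable F MeasureTheory.volume 0 (2 * π) :=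
    (intervalIntegrable_const (c := 1 / √(2 * π))).mono_fun hF_meas.aestronglyMeasurable
      (.of_forall fun θ ↦ (hF θ).trans (le_abs_self _))
  have hint := norm_integral_le_of_norm_le_of_norm_le_on (by positivity) (by linarith)
    (by linarith [pi_pos]) hF_int (fun θ _ ↦ hF θ) hFΓ
  calc ‖(1 / (2 * π) : ℂ) * ∫ θ in (0 : ℝ)..(2 * π), F θ‖
      = 1 / (2 * π) * ‖∫ θ in (0 : ℝ)..(2 * π), F θ‖ := by
        rw [norm_mul, show (1 / (2 * π) : ℂ) = ((1 / (2 * π) : ℝ) : ℂ) by push_cast; rfl,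
          norm_real, Real.norm_of_nonneg (by positivity)]
    _ ≤ 1 / (2 * π) * (1 / √(2 * π) * (h / 2 - 0) + h / ((2 * π - h) * √(2 * π))
          * (2 * π - h / 2 - h / 2) + 1 / √(2 * π) * (2 * π - (2 * π - h / 2))) := by gcongr
    _ = h / (π * √(2 * π)) := by field_simp; ring

/-- `H^{−1}`-estimate for the cut-off map: there is `C > 0` independent of `n`
such that for all `n ≠ 0` and `0 < h ≤ π`,
`‖(P_Γ^c − 1)φ_n‖_{H^{−1}(∂Ω)} ≤ C h`, where
`‖ψ‖²_{H^{−1}} = Σ_k (1+k²)^{−1}|ψ̂(k)|²`. -/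
theorem stmt_8 :
    ∃ C : ℝ, 0 < C ∧ ∀ (n : ℤ), n ≠ 0 → ∀ h : ℝ, 0 < h → h ≤ π →
      Real.sqrt (∑' k : ℤ, (1 + (k : ℝ) ^ 2)⁻¹ *
        (‖((1 / (2 * π) : ℂ) *
          ∫ θ in (0:ℝ)..(2 * π),
            (if θ ∈ Icc (h / 2) (2 * π - h / 2) then
                -(((1 / (2 * π - h) : ℂ)) *
                  ∫ τ in (h / 2)..(2 * π - h / 2),
                    (1 / Real.sqrt (2 * π) : ℂ) * Complex.exp ((n : ℂ) * (τ : ℂ) * Complex.I))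
              else
                -((1 / Real.sqrt (2 * π) : ℂ) * Complex.exp ((n : ℂ) * (θ : ℂ) * Complex.I)))
            * Complex.exp (-(k : ℂ) * (θ : ℂ) * Complex.I))‖) ^ 2)
      ≤ C * h := by
  have hS : 0 < ∑' k : ℤ, (1 + (k : ℝ) ^ 2)⁻¹ :=
    summable_inv_one_add_sq.tsum_pos (fun k ↦ by positivity) 0 (by norm_num)
  refine ⟨√(∑' k : ℤ, (1 + (k : ℝ) ^ 2)⁻¹) / (π * √(2 * π)), by positivity, ?_⟩
  intro n hn h h0 hπ
  calc _ ≤ √(∑' k : ℤ, (1 + (k : ℝ) ^ 2)⁻¹) * (h / (π * √(2 * π))) :=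
        sqrt_tsum_inv_one_add_sq_mul_sq_le _ (norm_fourierCoeff_cutoff_sub_le hn h0 hπ)
    _ = _ := by ring
end
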